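/- arXiv:2509.14251 — 2 statements merged into one kernel-verified Lean document; each statement's English description precedes it below -/
import Mathlib

section
/- There exists an injective map f : Γ → R such that req(γ) ⊆ qual(f(γ)) for every γ ∈ Γ (i.e., a matching assigning each selected path to a distinct qualified crew member) if and only if for every S ∈ 𝐒 the inequality |{γ ∈ Γ : req(γ) ∈ S}| ≤ |{r ∈ R : qual(r) ∈ S}| holds. -/
/-- Proposition 1: there is an injective assignment of selected paths to
qualified crew members iff for every `S` in the family `𝐒` (unions of
nonempty subfamilies of superset groups `E(q)`), the number of paths whose
requirement lies in `S` is at most the number of crew members whose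
qualification lies in `S`. -/
theorem stmt_0 {L : Type*} [Fintype L] [Nonempty L]
    {Γ R : Type*} [Fintype Γ] [Fintype R]
    (req : Γ → {q : Finset L // q.Nonempty})
    (qual : R → {q : Finset L // q.Nonempty}) :
    (∃ f : Γ → R, Function.Injective f ∧
        ∀ γ : Γ, (req γ : Finset L) ⊆ (qual (f γ) : Finset L)) ↔
      (∀ S : Set {q : Finset L // q.Nonempty},
        (∃ T : Set {q : Finset L // q.Nonempty}, T.Nonempty ∧
            S = ⋃ q ∈ T,
              {q' : {q : Finset L // q.Nonempty} | (q : Finset L) ⊆ (q' : Finset L)}) →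
          {γ : Γ | req γ ∈ S}.ncard ≤ {r : R | qual r ∈ S}.ncard) := by
  classical
  constructor
  · rintro ⟨f, hf, hsub⟩ S ⟨T, -, rfl⟩
    apply Set.ncard_le_ncard_of_injOn f
    · intro γ hγ
      simp only [Set.mem_setOf_eq, Set.mem_iUnion] at hγ ⊢
      obtain ⟨q, hq, hle⟩ := hγ
      exact ⟨q, hq, hle.trans (hsub γ)⟩
    · exact hf.injOn
  · intro hS
    set t : Γ → Finset R := fun γ =>
      Finset.univ.filter (fun r => (req γ : Finset L) ⊆ (qual r : Finset L)) with ht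
    have key : ∀ A : Finset Γ, A.card ≤ (A.biUnion t).card := by
      intro A
      rcases A.eq_empty_or_nonempty with rfl | hA
      · simp
      · set S : Set {q : Finset L // q.Nonempty} :=
          ⋃ q ∈ (↑(A.image req) : Set {q : Finset L // q.Nonempty}),
            {q' : {q : Finset L // q.Nonempty} | (q : Finset L) ⊆ (q' : Finset L)} with hSdef
        have h1 := hS S ⟨(↑(A.image req) : Set {q : Finset L // q.Nonempty}), by
          simpa using hA.image req, rfl⟩
        have h2 : (A : Set Γ) ⊆ {γ : Γ | req γ ∈ S} := by
          intro γ hγ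
          simp only [hSdef, Set.mem_setOf_eq, Set.mem_iUnion]
          exact ⟨req γ, by simpa using ⟨γ, hγ, rfl⟩, subset_rfl⟩
        have h3 : {r : R | qual r ∈ S} = (A.biUnion t : Set R) := by
          ext r
          simp only [hSdef, Set.mem_setOf_eq, Set.mem_iUnion, Finset.coe_biUnion,
            Set.mem_iUnion, ht, Finset.coe_filter, Finset.mem_coe, Finset.mem_image,
            Finset.mem_univ, true_and, Finset.coe_image, Set.mem_image]
          constructor
          · rintro ⟨q, ⟨γ, hγ, rfl⟩, hle⟩
            exact ⟨γ, hγ, hle⟩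
          · rintro ⟨γ, hγ, hle⟩
            exact ⟨req γ, ⟨γ, hγ, rfl⟩, hle⟩
        calc A.card = (A : Set Γ).ncard := (Set.ncard_coe_finset A).symm
          _ ≤ {γ : Γ | req γ ∈ S}.ncard :=
              Set.ncard_le_ncard h2 (Set.toFinite _)
          _ ≤ {r : R | qual r ∈ S}.ncard := h1
          _ = (A.biUnion t).card := by rw [h3, Set.ncard_coe_finset]
    obtain ⟨f, hf, hmem⟩ :=
      (Finset.all_card_le_biUnion_card_iff_exists_injective t).mp key
    exact ⟨f, hf, fun γ => by simpa [ht] using hmem γ⟩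
end

section
/- Suppose that for every upward-closed subset S ⊆ Q the inequality |{γ ∈ Γ : req(γ) ∈ S}| ≤ |{r ∈ R : qual(r) ∈ S}| holds. Then Hall's condition holds for the compatibility relation between paths and crew members: for every subset A ⊆ Γ, |A| ≤ |{r ∈ R : ∃ γ ∈ A, req(γ) ⊆ qual(r)}|. -/
/-- If for every upward-closed subset `S ⊆ Q` the counting inequality between
paths and crew members holds, then Hall's condition holds for the
compatibility relation between paths and crew members. -/
theorem stmt_6 {L : Type*} [Fintype L] [Nonempty L]
    {Γ R : Type*} [Fintype Γ] [Fintype R]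
    (req : Γ → {q : Finset L // q.Nonempty})
    (qual : R → {q : Finset L // q.Nonempty})
    (h : ∀ S : Set {q : Finset L // q.Nonempty},
      (∀ q ∈ S, ∀ q' : {q : Finset L // q.Nonempty},
        (q : Finset L) ⊆ (q' : Finset L) → q' ∈ S) →
      {γ : Γ | req γ ∈ S}.ncard ≤ {r : R | qual r ∈ S}.ncard) :
    ∀ A : Set Γ,
      A.ncard ≤ {r : R | ∃ γ ∈ A, (req γ : Finset L) ⊆ (qual r : Finset L)}.ncard := by
  intro A
  set S : Set {q : Finset L // q.Nonempty} :=
    {q | ∃ γ ∈ A, (req γ : Finset L) ⊆ (q : Finset L)} with hS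
  have hup : ∀ q ∈ S, ∀ q' : {q : Finset L // q.Nonempty},
      (q : Finset L) ⊆ (q' : Finset L) → q' ∈ S := by
    rintro q ⟨γ, hγ, hsub⟩ q' hsub'
    exact ⟨γ, hγ, hsub.trans hsub'⟩
  have h1 : A ⊆ {γ : Γ | req γ ∈ S} := fun γ hγ => ⟨γ, hγ, subset_rfl⟩
  have h2 : A.ncard ≤ {γ : Γ | req γ ∈ S}.ncard :=
    Set.ncard_le_ncard h1 (Set.toFinite _)
  have h3 := h S hup
  have h4 : {r : R | qual r ∈ S} =
      {r : R | ∃ γ ∈ A, (req γ : Finset L) ⊆ (qual r : Finset L)} := rfl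
  calc A.ncard ≤ {γ : Γ | req γ ∈ S}.ncard := h2
    _ ≤ {r : R | qual r ∈ S}.ncard := h3
    _ = _ := by rw [h4]
end
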